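/- arXiv:1606.01328 — 6 statements merged into one kernel-verified Lean document; each statement's English description precedes it below -/
import Mathlib

section
/- A triangle-free graph G is (2k+1)-[k]-colorable if and only if every weight function d : V → ℕ with weighted clique number at most 2k admits a proper multicoloring using at most 2k+1 colors. -/
/-!
Fix a linear order on the colors. Given a `[k]`-coloring `f` and a weight `d`, give `v` the
`min (d v) k` largest colors of `f v`, padded, when `d v > k`, by the `d v - k` smallest colors
outside `f v`. For an edge `uv` the sets `f u` and `f v` are disjoint, so `f u ⊆ (f v)ᶜ`: a color
of `f u` with at least `k - d u` smaller colors in `f u` has at least as many smaller colors in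
`(f v)ᶜ`, hence is among the `d v - k` smallest ones only if `k - d u < d v - k`, which
`d u + d v ≤ 2k` forbids.
-/

def IsMulticoloring {V : Type*} (G : SimpleGraph V) (d : V → ℕ) (n : ℕ)
    (f : V → Finset (Fin n)) : Prop :=
  (∀ v, d v ≤ (f v).card) ∧ ∀ ⦃u v⦄, G.Adj u v → Disjoint (f u) (f v)

open Finset

namespace Finset

variable {α : Type*} [LinearOrder α]

/-- The `m` smallest elements of `s` (all of `s` if `#s ≤ m`). -/
def lowest (m : ℕ) (s : Finset α) : Finset α :=
  {x ∈ s | #{y ∈ s | y < x} < m}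

theorem mem_lowest {m : ℕ} {s : Finset α} {x : α} :
    x ∈ lowest m s ↔ x ∈ s ∧ #{y ∈ s | y < x} < m :=
  mem_filter

theorem mem_sdiff_lowest {m : ℕ} {s : Finset α} {x : α} :
    x ∈ s \ lowest m s ↔ x ∈ s ∧ m ≤ #{y ∈ s | y < x} := by
  simp only [mem_sdiff, mem_lowest, not_and, not_lt]
  exact ⟨fun h => ⟨h.1, h.2 h.1⟩, fun h => ⟨h.1, fun _ => h.2⟩⟩

theorem lowest_subset (m : ℕ) (s : Finset α) : lowest m s ⊆ s :=
  filter_subset _ _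

@[simp]
theorem lowest_zero (s : Finset α) : lowest 0 s = ∅ := by
  ext x
  simp [mem_lowest]

theorem card_lowest_le (m : ℕ) (s : Finset α) : #(lowest m s) ≤ m := by
  have hrank : StrictMonoOn (fun x => #{y ∈ s | y < x}) s := fun x hx x' _ hlt =>
    card_lt_card <| ssubset_iff_of_subset (monotone_filter_right s fun _ _ hy => hy.trans hlt)
      |>.2 ⟨x, by simpa [hlt] using hx⟩
  simpa using card_le_card_of_injOn _ (fun x hx => mem_range.2 (mem_lowest.1 hx).2)
    (hrank.mono (lowest_subset m s)).injOn

theorem min_le_card_lowest (m : ℕ) (s : Finset α) : min m #s ≤ #(lowest m s) := by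
  rcases (s \ lowest m s).eq_empty_or_nonempty with h | h
  · have := card_le_card (sdiff_eq_empty_iff_subset.1 h)
    omega
  · obtain ⟨-, hmz⟩ := mem_sdiff_lowest.1 ((s \ lowest m s).min'_mem h)
    have hbelow : {y ∈ s | y < (s \ lowest m s).min' h} ⊆ lowest m s := fun y hy => by
      rw [mem_filter] at hy
      by_contra hyl
      exact (min'_le _ y (mem_sdiff.2 ⟨hy.1, hyl⟩)).not_gt hy.2
    have := card_le_card hbelow
    omega

variable [Fintype α]

/-- Resize the color set `A` to `m` colors: keep its largest `min m #A` elements and, if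
`#A < m`, add the `m - #A` smallest colors outside `A`. -/
def resizeColors (m : ℕ) (A : Finset α) : Finset α :=
  (A \ lowest (#A - m) A) ∪ lowest (m - #A) Aᶜ

theorem le_card_resizeColors {m : ℕ} (hm : m ≤ Fintype.card α) (A : Finset α) :
    m ≤ #(resizeColors m A) := by
  have hkept : #A - (#A - m) ≤ #(A \ lowest (#A - m) A) := by
    rw [card_sdiff_of_subset (lowest_subset _ _)]
    have := card_lowest_le (#A - m) A
    omega
  have hpad := min_le_card_lowest (m - #A) Aᶜ
  rw [card_compl] at hpad
  rw [resizeColors, card_union_of_disjoint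
    (disjoint_compl_right.mono sdiff_subset (lowest_subset _ _))]
  omega

theorem disjoint_sdiff_lowest_lowest_compl {A B : Finset α} {m n : ℕ} (hAB : Disjoint A B)
    (hmn : m + n ≤ #A + #B) : Disjoint (A \ lowest (#A - m) A) (lowest (n - #B) Bᶜ) := by
  refine disjoint_left.2 fun x hxA hxB => ?_
  obtain ⟨-, hA⟩ := mem_sdiff_lowest.1 hxA
  obtain ⟨-, hB⟩ := mem_lowest.1 hxB
  have : #{y ∈ A | y < x} ≤ #{y ∈ Bᶜ | y < x} :=
    card_le_card (filter_subset_filter _ (subset_compl_iff_disjoint_right.2 hAB))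
  omega

theorem disjoint_resizeColors {A B : Finset α} {m n : ℕ} (hAB : Disjoint A B)
    (hmn : m + n ≤ #A + #B) : Disjoint (resizeColors m A) (resizeColors n B) := by
  have hpads : Disjoint (lowest (m - #A) Aᶜ) (lowest (n - #B) Bᶜ) := by
    rcases le_total m #A with hm | hn
    · simp [Nat.sub_eq_zero_of_le hm]
    · simp [Nat.sub_eq_zero_of_le (show n ≤ #B by omega)]
  rw [resizeColors, resizeColors, disjoint_union_left, disjoint_union_right, disjoint_union_right]
  exact ⟨⟨hAB.mono sdiff_subset sdiff_subset, disjoint_sdiff_lowest_lowest_compl hAB hmn⟩,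
    (disjoint_sdiff_lowest_lowest_compl hAB.symm (by omega)).symm, hpads⟩

end Finset

theorem kColorable_iff_multicolorable_general {V : Type*} (G : SimpleGraph V)
    (k : ℕ) :
    (∃ f : V → Finset (Fin (2 * k + 1)),
        (∀ v, (f v).card = k) ∧ ∀ ⦃u v⦄, G.Adj u v → Disjoint (f u) (f v)) ↔
    (∀ d : V → ℕ, (∀ v, d v ≤ 2 * k) → (∀ ⦃u v⦄, G.Adj u v → d u + d v ≤ 2 * k) →
        ∃ f : V → Finset (Fin (2 * k + 1)), IsMulticoloring G d (2 * k + 1) f) := by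
  constructor
  · rintro ⟨f, hcard, hdisj⟩ d hd hedge
    refine ⟨fun v => resizeColors (d v) (f v), fun v => ?_, fun u v huv => ?_⟩
    · exact le_card_resizeColors (by simpa using (hd v).trans (Nat.le_succ _)) (f v)
    · exact disjoint_resizeColors (hdisj huv) (by rw [hcard, hcard, ← two_mul]; exact hedge huv)
  · intro h
    obtain ⟨f, hcard, hdisj⟩ := h (fun _ => k) (fun _ => by omega) (fun _ _ _ => by omega)
    choose g hgf hg using fun v => exists_subset_card_eq (hcard v)
    exact ⟨g, hg, fun u v huv => (hdisj huv).mono (hgf u) (hgf v)⟩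

/-- A triangle-free graph is (2k+1)-[k]-colorable iff every weight function with
weighted clique number at most 2k admits a proper multicoloring with 2k+1 colors. -/
theorem kColorable_iff_multicolorable {V : Type*} (G : SimpleGraph V)
    (htf : G.CliqueFree 3) (k : ℕ) :
    (∃ f : V → Finset (Fin (2 * k + 1)),
        (∀ v, (f v).card = k) ∧ ∀ ⦃u v⦄, G.Adj u v → Disjoint (f u) (f v)) ↔
    (∀ d : V → ℕ, (∀ v, d v ≤ 2 * k) → (∀ ⦃u v⦄, G.Adj u v → d u + d v ≤ 2 * k) →
        ∃ f : V → Finset (Fin (2 * k + 1)), IsMulticoloring G d (2 * k + 1) f) :=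
  kColorable_iff_multicolorable_general G k
end

section
/- If a triangle-free graph G admits a (2k+1)-[k]-coloring, then for every weight function d with weighted clique number ω, G admits a proper multicoloring with ⌈(2k+1)ω/(2k)⌉ colors. -/
/-!
Split the `N = ⌈(2k+1)ω/(2k)⌉` colours into `2k+1` classes of size at most `β = N - ω`, and
let `X_v` be the union of the classes indexed by the `k`-set of `v`. List the colours as `X_v`
increasingly followed by its complement decreasingly, and give `v` the first `d v` of them.
Along an edge `uv` the sets `X_u`, `X_v` are disjoint and miss a single class, so
`|X_u| + |X_v| ≥ N - β = ω`, while a colour at positions `p` and `q` of the two lists always has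
`p + q + 1 ≥ |X_u| + |X_v|`; hence no colour is given to both `u` and `v`.
-/

open Finset

section FoldPos

variable {α : Type*} [Fintype α] [LinearOrder α]

/-- The position of `c` when `X` is listed increasingly, followed by `Xᶜ` listed decreasingly. -/
def foldPos (X : Finset α) (c : α) : ℕ :=
  if c ∈ X then #{x ∈ X | x < c} else #X + #{y ∈ Xᶜ | c < y}

theorem foldPos_of_mem {X : Finset α} {c : α} (hc : c ∈ X) : foldPos X c = #{x ∈ X | x < c} :=
  if_pos hc

theorem foldPos_of_notMem {X : Finset α} {c : α} (hc : c ∉ X) :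
    foldPos X c = #X + #{y ∈ Xᶜ | c < y} :=
  if_neg hc

theorem foldPos_lt_card_of_mem {X : Finset α} {c : α} (hc : c ∈ X) : foldPos X c < #X := by
  rw [foldPos_of_mem hc]
  exact card_lt_card (filter_ssubset.2 ⟨c, hc, lt_irrefl c⟩)

theorem card_le_foldPos_of_notMem {X : Finset α} {c : α} (hc : c ∉ X) : #X ≤ foldPos X c := by
  rw [foldPos_of_notMem hc]
  exact Nat.le_add_right _ _

theorem foldPos_lt_card (X : Finset α) (c : α) : foldPos X c < Fintype.card α := by
  by_cases hc : c ∈ X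
  · exact (foldPos_lt_card_of_mem hc).trans_le (card_le_univ X)
  · have hlt : #{y ∈ Xᶜ | c < y} < #Xᶜ :=
      card_lt_card (filter_ssubset.2 ⟨c, mem_compl.2 hc, lt_irrefl c⟩)
    rw [foldPos_of_notMem hc, ← card_add_card_compl X]
    omega

theorem foldPos_strictMonoOn (X : Finset α) : StrictMonoOn (foldPos X) X := by
  intro a ha b hb hab
  rw [foldPos_of_mem ha, foldPos_of_mem hb]
  refine card_lt_card ((ssubset_iff_of_subset fun x hx => ?_).2 ⟨a, ?_, ?_⟩)
  · simp only [mem_filter] at hx ⊢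
    exact ⟨hx.1, hx.2.trans hab⟩
  · exact mem_filter.2 ⟨ha, hab⟩
  · simp

theorem foldPos_strictAntiOn (X : Finset α) : StrictAntiOn (foldPos X) (Xᶜ : Finset α) := by
  intro a ha b hb hab
  rw [foldPos_of_notMem (mem_compl.1 ha), foldPos_of_notMem (mem_compl.1 hb),
    Nat.add_lt_add_iff_left]
  refine card_lt_card ((ssubset_iff_of_subset fun x hx => ?_).2 ⟨b, ?_, ?_⟩)
  · simp only [mem_filter] at hx ⊢
    exact ⟨hx.1, hab.trans hx.2⟩
  · exact mem_filter.2 ⟨hb, hab⟩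
  · simp

theorem foldPos_injective (X : Finset α) : Function.Injective (foldPos X) := by
  intro a b h
  by_cases ha : a ∈ X <;> by_cases hb : b ∈ X
  · exact (foldPos_strictMonoOn X).injOn ha hb h
  · have := foldPos_lt_card_of_mem ha
    have := card_le_foldPos_of_notMem hb
    omega
  · have := foldPos_lt_card_of_mem hb
    have := card_le_foldPos_of_notMem ha
    omega
  · exact (foldPos_strictAntiOn X).injOn (by simpa) (by simpa) h

theorem image_foldPos_univ (X : Finset α) : univ.image (foldPos X) = range (Fintype.card α) :=
  eq_of_subset_of_card_le (fun _ hi => by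
      obtain ⟨c, -, rfl⟩ := mem_image.1 hi
      exact mem_range.2 (foldPos_lt_card X c))
    (by rw [card_image_of_injective _ (foldPos_injective X), card_range, card_univ])

theorem card_filter_foldPos_lt (X : Finset α) {t : ℕ} (ht : t ≤ Fintype.card α) :
    #{c | foldPos X c < t} = t := by
  have hrange : {i ∈ range (Fintype.card α) | i < t} = range t := by
    ext i
    simp only [mem_filter, mem_range]
    omega
  rw [← card_image_of_injective _ (foldPos_injective X), ← filter_image (p := (· < t)),
    image_foldPos_univ, hrange, card_range]

theorem card_add_card_le_foldPos_add_foldPos_of_mem {X Y : Finset α} (hXY : Disjoint X Y) {c : α}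
    (hc : c ∈ X) : #X + #Y ≤ foldPos X c + foldPos Y c + 1 := by
  have hcY : c ∉ Y := disjoint_left.1 hXY hc
  have hsplit := card_filter_add_card_filter_not (s := X) (· < c)
  have hupper : {x ∈ X | ¬x < c} ⊆ insert c {y ∈ Yᶜ | c < y} := by
    intro x hx
    obtain ⟨hxX, hxc⟩ := mem_filter.1 hx
    rcases (not_lt.1 hxc).eq_or_lt with rfl | hcx
    · exact mem_insert_self _ _
    · exact mem_insert_of_mem (mem_filter.2 ⟨mem_compl.2 (disjoint_left.1 hXY hxX), hcx⟩)
  have := (card_le_card hupper).trans (card_insert_le _ _)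
  rw [foldPos_of_mem hc, foldPos_of_notMem hcY]
  omega

theorem card_add_card_le_foldPos_add_foldPos {X Y : Finset α} (hXY : Disjoint X Y) (c : α) :
    #X + #Y ≤ foldPos X c + foldPos Y c + 1 := by
  by_cases hX : c ∈ X
  · exact card_add_card_le_foldPos_add_foldPos_of_mem hXY hX
  by_cases hY : c ∈ Y
  · have := card_add_card_le_foldPos_add_foldPos_of_mem hXY.symm hY
    omega
  · have := card_le_foldPos_of_notMem hX
    have := card_le_foldPos_of_notMem hY
    omega

end FoldPos

theorem exists_fiber_card_le {N m β : ℕ} [NeZero m] (h : N ≤ m * β) :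
    ∃ p : Fin N → Fin m, ∀ i, #{c | p c = i} ≤ β := by
  refine ⟨fun c => Fin.ofNat m c, fun i => ?_⟩
  refine (card_le_card_of_injOn (fun c : Fin N => (c : ℕ) / m) (t := range β) (fun c _ => ?_)
    fun a ha b hb hab => ?_).trans_eq (card_range β)
  · rw [coe_range, Set.mem_Iio, Nat.div_lt_iff_lt_mul (Nat.pos_of_neZero m), mul_comm]
    exact c.isLt.trans_le h
  · simp only [coe_filter, mem_univ, true_and, Set.mem_ofPred_eq, Fin.ext_iff, Fin.val_ofNat]
      at ha hb hab
    rw [Fin.ext_iff, ← Nat.div_add_mod (a : ℕ) m, ← Nat.div_add_mod (b : ℕ) m, ha, hb, hab]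

theorem card_filter_notMem_le {α ι : Type*} [Fintype α] [Fintype ι] [DecidableEq ι]
    {p : α → ι} {β : ℕ} (hp : ∀ i, #{c | p c = i} ≤ β) (s : Finset ι) :
    #{c | p c ∉ s} ≤ β * #sᶜ :=
  card_le_mul_card_image_of_maps_to (fun c hc => by simpa using hc) β fun i _ =>
    (card_le_card fun c hc => by simp_all).trans (hp i)

theorem le_card_filter_mem_add_card_filter_mem_add {N m β : ℕ} {p : Fin N → Fin m}
    (hp : ∀ i, #{c | p c = i} ≤ β) {s t : Finset (Fin m)} (hst : Disjoint s t)
    (hcard : m ≤ #s + #t + 1) : N ≤ #{c | p c ∈ s} + #{c | p c ∈ t} + β := by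
  have hunion : #{c | p c ∈ s} + #{c | p c ∈ t} = #{c | p c ∈ s ∪ t} := by
    rw [← card_union_of_disjoint (disjoint_filter.2 fun c _ hs ht => disjoint_left.1 hst hs ht),
      ← filter_or]
    simp only [mem_union]
  have hsplit := card_filter_add_card_filter_not (s := univ) (fun c => p c ∈ s ∪ t)
  have hcompl : #(s ∪ t)ᶜ ≤ 1 := by
    rw [card_compl, Fintype.card_fin, card_union_of_disjoint hst]
    omega
  have hrest := (card_filter_notMem_le hp (s ∪ t)).trans
    (mul_le_of_le_one_right (Nat.zero_le β) hcompl)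
  rw [card_univ, Fintype.card_fin] at hsplit
  omega

theorem isMulticoloring_foldPos {V : Type*} (G : SimpleGraph V) {n : ℕ} (X : V → Finset (Fin n))
    {d : V → ℕ} (hd : ∀ v, d v ≤ n)
    (hadj : ∀ ⦃u v⦄, G.Adj u v → Disjoint (X u) (X v) ∧ d u + d v ≤ #(X u) + #(X v)) :
    IsMulticoloring G d n fun v => {c | foldPos (X v) c < d v} := by
  refine ⟨fun v => (card_filter_foldPos_lt (X v) (by simpa using hd v)).ge, fun u v huv => ?_⟩
  refine disjoint_left.2 fun c hcu hcv => ?_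
  simp only [mem_filter, mem_univ, true_and] at hcu hcv
  have := card_add_card_le_foldPos_add_foldPos (hadj huv).1 c
  have := (hadj huv).2
  omega

theorem Rat.le_ceil_toNat (q : ℚ) : q ≤ q.ceil.toNat :=
  Rat.le_ceil.trans (Int.cast_le.2 q.ceil.self_le_toNat : ((q.ceil : ℤ) : ℚ) ≤ (q.ceil.toNat : ℤ))

theorem multicoloring_from_kColoring_general {V : Type*} (G : SimpleGraph V)
    (k : ℕ) (hk : 0 < k)
    (hcol : ∃ f : V → Finset (Fin (2 * k + 1)),
        (∀ v, (f v).card = k) ∧ ∀ ⦃u v⦄, G.Adj u v → Disjoint (f u) (f v))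
    (d : V → ℕ) (ω : ℕ)
    (hv : ∀ v, d v ≤ ω) (he : ∀ ⦃u v⦄, G.Adj u v → d u + d v ≤ ω) :
    ∃ f : V → Finset (Fin (((2 * k + 1) * ω : ℚ) / (2 * k) : ℚ).ceil.toNat),
      IsMulticoloring G d _ f := by
  obtain ⟨g, hg_card, hg_disj⟩ := hcol
  have hq := Rat.le_ceil_toNat (((2 * k + 1) * ω : ℚ) / (2 * k))
  generalize (((2 * k + 1) * ω : ℚ) / (2 * k) : ℚ).ceil.toNat = N at hq ⊢
  have hN : (2 * k + 1) * ω ≤ 2 * k * N := by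
    rw [div_le_iff₀ (by positivity)] at hq
    exact_mod_cast hq.trans_eq (mul_comm _ _)
  have hωN : ω ≤ N := by nlinarith
  obtain ⟨p, hp⟩ := exists_fiber_card_le (N := N) (m := 2 * k + 1) (β := N - ω) <| by
    zify [hωN] at hN ⊢
    linarith
  refine ⟨_, isMulticoloring_foldPos G (fun v => {c | p c ∈ g v}) (fun v => (hv v).trans hωN)
    fun u v huv => ⟨disjoint_filter.2 fun _ _ hu => disjoint_left.1 (hg_disj huv) hu, ?_⟩⟩
  have := le_card_filter_mem_add_card_filter_mem_add hp (hg_disj huv)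
    (by rw [hg_card, hg_card]; omega)
  have := he huv
  omega

/-- A (2k+1)-[k]-colorable triangle-free graph admits, for every weight function of
weighted clique number ω, a proper multicoloring with ⌈(2k+1)ω/(2k)⌉ colors. -/
theorem multicoloring_from_kColoring {V : Type*} (G : SimpleGraph V)
    (htf : G.CliqueFree 3) (k : ℕ) (hk : 0 < k)
    (hcol : ∃ f : V → Finset (Fin (2 * k + 1)),
        (∀ v, (f v).card = k) ∧ ∀ ⦃u v⦄, G.Adj u v → Disjoint (f u) (f v))
    (d : V → ℕ) (ω : ℕ)
    (hv : ∀ v, d v ≤ ω) (he : ∀ ⦃u v⦄, G.Adj u v → d u + d v ≤ ω) :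
    ∃ f : V → Finset (Fin (((2 * k + 1) * ω : ℚ) / (2 * k) : ℚ).ceil.toNat),
      IsMulticoloring G d _ f :=
  multicoloring_from_kColoring_general G k hk hcol d ω hv he
end

section
/- If a weighted graph G admits a proper multicoloring with N colors for the weight function v ↦ 2⌊d(v)/2⌋, and G is properly 3-colorable, then G admits a proper multicoloring with N+3 colors for the weight function d. -/
/-- From a multicoloring of the rounded-down-to-even weights with N colors and a
proper 3-coloring, get a multicoloring of the full weights with N+3 colors. -/
theorem multicoloring_of_even_part {V : Type*} (G : SimpleGraph V) (d : V → ℕ) (N : ℕ)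
    (heven : ∃ f : V → Finset (Fin N), IsMulticoloring G (fun v => 2 * (d v / 2)) N f)
    (h3 : ∃ c : V → Fin 3, ∀ ⦃u v⦄, G.Adj u v → c u ≠ c v) :
    ∃ f : V → Finset (Fin (N + 3)), IsMulticoloring G d (N + 3) f := by
  obtain ⟨f₀, hcard, hdisj⟩ := heven
  obtain ⟨c, hc⟩ := h3
  set emb : Fin N ↪ Fin (N + 3) := (Fin.castLEEmb (by omega)) with hemb
  refine ⟨fun v => (f₀ v).map emb ∪ (if d v % 2 = 1 then {Fin.natAdd N (c v)} else ∅),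
    fun v => ?_, fun u v huv => ?_⟩
  · by_cases h : d v % 2 = 1
    · dsimp only; rw [if_pos h, Finset.card_union_of_disjoint, Finset.card_map, Finset.card_singleton]
      · have := hcard v; simp only [] at this; omega
      · simp only [Finset.disjoint_singleton_right, Finset.mem_map]
        rintro ⟨x, -, hx⟩
        have : (emb x : ℕ) = N + c v := congrArg Fin.val hx
        simp [hemb] at this
        omega
    · dsimp only; rw [if_neg h]
      simp only [Finset.union_empty, Finset.card_map]
      have := hcard v; simp only [] at this; omega
  · rw [Finset.disjoint_union_left]
    constructor <;> rw [Finset.disjoint_union_right] <;> constructor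
    · exact Finset.disjoint_map _ |>.mpr (hdisj huv)
    · split
      · simp only [Finset.disjoint_singleton_right, Finset.mem_map]
        rintro ⟨x, -, hx⟩
        have : (emb x : ℕ) = N + c v := congrArg Fin.val hx
        simp [hemb] at this; omega
      · exact Finset.disjoint_empty_right _
    · split
      · simp only [Finset.disjoint_singleton_left, Finset.mem_map]
        rintro ⟨x, -, hx⟩
        have : (emb x : ℕ) = N + c u := congrArg Fin.val hx
        simp [hemb] at this; omega
      · exact Finset.disjoint_empty_left _
    · split <;> split
      · simp only [Finset.disjoint_singleton_right, Finset.mem_singleton]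
        intro h
        exact hc huv (by
          have := congrArg Fin.val h
          simp only [Fin.natAdd] at this
          exact Fin.ext (by omega))
      · exact Finset.disjoint_empty_right _
      · exact Finset.disjoint_empty_left _
      · exact Finset.disjoint_empty_left _
end

section
/- In the triangular lattice, a vertex that does not lie on any triangle (3-clique with both its other vertices among a given vertex set V, within the induced subgraph) of an induced subgraph G has degree at most 3 in G. -/
def TriLattice : SimpleGraph (ℤ × ℤ) where
  Adj u v := (v.1 - u.1, v.2 - u.2) ∈
    ({(1,0), (-1,0), (0,1), (0,-1), (1,-1), (-1,1)} : Set (ℤ × ℤ))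
  symm := by
    constructor
    intro u v h
    simp only [Set.mem_insert_iff, Set.mem_singleton_iff, Prod.mk.injEq] at *
    omega
  loopless := by
    constructor
    intro u h
    simp only [Set.mem_insert_iff, Set.mem_singleton_iff, Prod.mk.injEq] at h
    omega

instance : DecidableRel TriLattice.Adj := fun u v =>
  decidable_of_iff ((v.1 - u.1, v.2 - u.2) ∈
    ([(1,0), (-1,0), (0,1), (0,-1), (1,-1), (-1,1)] : List (ℤ × ℤ)))
    (by simp [TriLattice])

/-!
The six lattice neighbours of `v` split into three pairs of mutually adjacent vertices (each pair
spans a triangle with `v`). If `v` lies on no triangle, each pair contributes at most one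
neighbour in `V`, so `v` has at most three neighbours in `V`.
-/

namespace SimpleGraph

variable {α ι : Type*} {G : SimpleGraph α} [DecidableRel G.Adj]

theorem card_filter_adj_le_of_cliques_cover [Fintype ι] {V : Finset α} {v : α}
    {C : ι → Set α} (hC : ∀ i, G.IsClique (C i)) (hcover : ∀ u, G.Adj v u → ∃ i, u ∈ C i)
    (hnt : ¬ ∃ u ∈ V, ∃ w ∈ V, G.Adj v u ∧ G.Adj v w ∧ G.Adj u w) :
    (V.filter (G.Adj v)).card ≤ Fintype.card ι := by
  refine Finset.card_le_card_of_forall_subsingleton (fun u i => u ∈ C i) ?_ ?_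
  · intro u hu
    obtain ⟨i, hi⟩ := hcover u (Finset.mem_filter.1 hu).2
    exact ⟨i, Finset.mem_univ i, hi⟩
  · rintro i - u ⟨hu, huC⟩ w ⟨hw, hwC⟩
    rw [Finset.mem_filter] at hu hw
    by_contra hne
    exact hnt ⟨u, hu.1, w, hw.1, hu.2, hw.2, hC i huC hwC hne⟩

end SimpleGraph

namespace TriLattice

def sector (v : ℤ × ℤ) : Fin 3 → Set (ℤ × ℤ)
  | 0 => {v + (1, 0), v + (1, -1)}
  | 1 => {v + (0, -1), v + (-1, 0)}
  | 2 => {v + (-1, 1), v + (0, 1)}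

theorem isClique_sector (v : ℤ × ℤ) (i : Fin 3) : TriLattice.IsClique (sector v i) := by
  fin_cases i <;> simp [sector, TriLattice]

theorem exists_mem_sector_of_adj {v u : ℤ × ℤ} (h : TriLattice.Adj v u) :
    ∃ i, u ∈ sector v i := by
  simp only [TriLattice, Set.mem_insert_iff, Set.mem_singleton_iff, Prod.mk.injEq] at h
  simp only [Fin.exists_fin_succ, Fin.exists_fin_zero, Fin.succ_zero_eq_one, Fin.succ_one_eq_two,
    sector, Set.mem_insert_iff, Set.mem_singleton_iff, Prod.ext_iff, Prod.fst_add, Prod.snd_add]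
  omega

end TriLattice

theorem degree_le_three_of_no_triangle_general (V : Finset (ℤ × ℤ)) (v : ℤ × ℤ)
    (hnt : ¬ ∃ u ∈ V, ∃ w ∈ V,
      TriLattice.Adj v u ∧ TriLattice.Adj v w ∧ TriLattice.Adj u w) :
    (V.filter (fun u => TriLattice.Adj v u)).card ≤ 3 :=
  SimpleGraph.card_filter_adj_le_of_cliques_cover (TriLattice.isClique_sector v)
    (fun _ => TriLattice.exists_mem_sector_of_adj) hnt

/-- A vertex not on any triangle of an induced subgraph of the triangular lattice
has degree at most 3 in that subgraph. -/
theorem degree_le_three_of_no_triangle (V : Finset (ℤ × ℤ)) (v : ℤ × ℤ) (hv : v ∈ V)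
    (hnt : ¬ ∃ u ∈ V, ∃ w ∈ V,
      TriLattice.Adj v u ∧ TriLattice.Adj v w ∧ TriLattice.Adj u w) :
    (V.filter (fun u => TriLattice.Adj v u)).card ≤ 3 :=
  degree_le_three_of_no_triangle_general V v hnt
end

section
/- Let G be an induced subgraph of the triangular lattice with base coloring bc(x,y)=(x+2y) mod 3, and let v be a vertex not lying on any triangle of G whose neighbors in G all have weight 4, where v has weight 8. Then either all neighbors of v in G have the same base color (hence v is isolated in the subgraph obtained by deleting all 'light' vertices of that base color), or v has exactly two neighbors of different base colors (hence v has degree at most 1 in each of the two subgraphs obtained by deleting light vertices of one of those two colors). -/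
def bc (p : ℤ × ℤ) : ZMod 3 := ((p.1 + 2 * p.2 : ℤ) : ZMod 3)

/-- Vertex set of the subgraph G_c: delete light vertices (weight < 6) of base color c. -/
def Vsub (V : Finset (ℤ × ℤ)) (d : ℤ × ℤ → ℕ) (c : ZMod 3) : Finset (ℤ × ℤ) :=
  V.filter (fun u => ¬ (d u < 6 ∧ bc u = c))

/-! Two neighbours of a vertex `v` of the triangular lattice are non-adjacent only when they
have the same base colour or are opposite through `v`. So if `v` is on no triangle and its
neighbours do not all share a colour, two of them, `u₁` and `u₂ = 2v - u₁`, are opposite; every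
other neighbour of `v` would be adjacent to one of these two, so there is none. Deleting the light
vertices of colour `bc u₁` (resp. `bc u₂`) then leaves at most `u₂` (resp. `u₁`) next to `v`. -/

def triDirs : Finset (ℤ × ℤ) := {(1, 0), (-1, 0), (0, 1), (0, -1), (1, -1), (-1, 1)}

theorem TriLattice.adj_iff_sub_mem {u w : ℤ × ℤ} : TriLattice.Adj u w ↔ w - u ∈ triDirs := by
  simp [TriLattice, triDirs, Prod.ext_iff]

theorem bc_add (u w : ℤ × ℤ) : bc (u + w) = bc u + bc w := by
  simp only [bc, Prod.fst_add, Prod.snd_add]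
  push_cast
  ring

theorem eq_neg_of_bc_ne_of_sub_notMem_triDirs :
    ∀ a ∈ triDirs, ∀ b ∈ triDirs, bc a ≠ bc b → b - a ∉ triDirs → b = -a := by
  decide

theorem sub_mem_triDirs_or_neg_sub_mem_triDirs :
    ∀ a ∈ triDirs, ∀ c ∈ triDirs, c ≠ a → c ≠ -a → a - c ∈ triDirs ∨ -a - c ∈ triDirs := by
  decide

section Neighbours

variable {v u u₁ u₂ : ℤ × ℤ}

theorem TriLattice.sub_eq_neg_of_not_adj (h₁ : TriLattice.Adj v u₁) (h₂ : TriLattice.Adj v u₂)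
    (hbc : bc u₁ ≠ bc u₂) (hn : ¬ TriLattice.Adj u₁ u₂) : u₂ - v = -(u₁ - v) := by
  rw [TriLattice.adj_iff_sub_mem] at h₁ h₂ hn
  refine eq_neg_of_bc_ne_of_sub_notMem_triDirs _ h₁ _ h₂ (fun h => hbc ?_) (by simpa using hn)
  rw [← sub_add_cancel u₁ v, ← sub_add_cancel u₂ v, bc_add, bc_add, h]

theorem TriLattice.adj_or_adj_of_sub_eq_neg (hopp : u₂ - v = -(u₁ - v))
    (h : TriLattice.Adj v u) (h₁ : TriLattice.Adj v u₁) (hne₁ : u ≠ u₁) (hne₂ : u ≠ u₂) :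
    TriLattice.Adj u u₁ ∨ TriLattice.Adj u u₂ := by
  simp only [TriLattice.adj_iff_sub_mem] at h h₁ ⊢
  have key := sub_mem_triDirs_or_neg_sub_mem_triDirs _ h₁ _ h
    (fun e => hne₁ (sub_left_inj.mp e)) (fun e => hne₂ (sub_left_inj.mp (e.trans hopp.symm)))
  rwa [sub_sub_sub_cancel_right, ← hopp, sub_sub_sub_cancel_right] at key

end Neighbours

theorem notMem_Vsub_of_light {V : Finset (ℤ × ℤ)} {d : ℤ × ℤ → ℕ} {u : ℤ × ℤ} (hu : d u < 6) :
    u ∉ Vsub V d (bc u) := by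
  simp [Vsub, hu]

theorem card_filter_adj_Vsub_le_one {V : Finset (ℤ × ℤ)} {d : ℤ × ℤ → ℕ} {v w w' : ℤ × ℤ}
    (hw : d w < 6) (hpair : ∀ u ∈ V, TriLattice.Adj v u → u = w ∨ u = w') :
    ((Vsub V d (bc w)).filter (fun u => TriLattice.Adj v u)).card ≤ 1 := by
  refine Finset.card_le_one_iff_subset_singleton.mpr ⟨w', fun u hu => ?_⟩
  obtain ⟨huVsub, hadj⟩ := Finset.mem_filter.mp hu
  rcases hpair u (Finset.mem_filter.mp huVsub).1 hadj with rfl | rfl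
  · exact absurd huVsub (notMem_Vsub_of_light hw)
  · exact Finset.mem_singleton_self u

theorem heavy_vertex_dichotomy_general (V : Finset (ℤ × ℤ)) (d : ℤ × ℤ → ℕ)
    (v : ℤ × ℤ)
    (hlight : ∀ u ∈ V, TriLattice.Adj v u → d u = 4)
    (hnt : ∀ u ∈ V, ∀ w ∈ V,
      TriLattice.Adj v u → TriLattice.Adj v w → ¬ TriLattice.Adj u w) :
    (∃ c : ZMod 3, (∀ u ∈ V, TriLattice.Adj v u → bc u = c) ∧
      ∀ u ∈ Vsub V d c, ¬ TriLattice.Adj v u) ∨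
    (∃ u₁ ∈ V, ∃ u₂ ∈ V, TriLattice.Adj v u₁ ∧ TriLattice.Adj v u₂ ∧
      bc u₁ ≠ bc u₂ ∧ (∀ u ∈ V, TriLattice.Adj v u → u = u₁ ∨ u = u₂) ∧
      ((Vsub V d (bc u₁)).filter (fun u => TriLattice.Adj v u)).card ≤ 1 ∧
      ((Vsub V d (bc u₂)).filter (fun u => TriLattice.Adj v u)).card ≤ 1) := by
  have hlight_lt : ∀ u ∈ V, TriLattice.Adj v u → d u < 6 := fun u hu hadj => by
    rw [hlight u hu hadj]; norm_num
  by_cases hmono : ∃ c : ZMod 3, ∀ u ∈ V, TriLattice.Adj v u → bc u = c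
  · obtain ⟨c, hc⟩ := hmono
    refine .inl ⟨c, hc, fun u hu hadj => ?_⟩
    have huV : u ∈ V := (Finset.mem_filter.mp hu).1
    rw [← hc u huV hadj] at hu
    exact notMem_Vsub_of_light (hlight_lt u huV hadj) hu
  push Not at hmono
  obtain ⟨u₁, hu₁, hadj₁, -⟩ := hmono 0
  obtain ⟨u₂, hu₂, hadj₂, hbc⟩ := hmono (bc u₁)
  have hopp := TriLattice.sub_eq_neg_of_not_adj hadj₁ hadj₂ hbc.symm
    (hnt u₁ hu₁ u₂ hu₂ hadj₁ hadj₂)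
  have hpair : ∀ u ∈ V, TriLattice.Adj v u → u = u₁ ∨ u = u₂ := by
    intro u hu hadj
    by_contra! hne
    rcases TriLattice.adj_or_adj_of_sub_eq_neg hopp hadj hadj₁ hne.1 hne.2 with h | h
    exacts [hnt u hu u₁ hu₁ hadj hadj₁ h, hnt u hu u₂ hu₂ hadj hadj₂ h]
  refine .inr ⟨u₁, hu₁, u₂, hu₂, hadj₁, hadj₂, hbc.symm, hpair, ?_, ?_⟩
  · exact card_filter_adj_Vsub_le_one (hlight_lt u₁ hu₁ hadj₁) hpair
  · exact card_filter_adj_Vsub_le_one (hlight_lt u₂ hu₂ hadj₂) fun u hu hadj =>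
      (hpair u hu hadj).symm

/-- A weight-8 vertex not on a triangle, all of whose neighbors are light (weight 4),
is isolated in one of the subgraphs G_c or has degree ≤ 1 in two of them. -/
theorem heavy_vertex_dichotomy (V : Finset (ℤ × ℤ)) (d : ℤ × ℤ → ℕ)
    (v : ℤ × ℤ) (hv : v ∈ V) (hd : d v = 8)
    (hlight : ∀ u ∈ V, TriLattice.Adj v u → d u = 4)
    (hnt : ∀ u ∈ V, ∀ w ∈ V,
      TriLattice.Adj v u → TriLattice.Adj v w → ¬ TriLattice.Adj u w) :
    (∃ c : ZMod 3, (∀ u ∈ V, TriLattice.Adj v u → bc u = c) ∧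
      ∀ u ∈ Vsub V d c, ¬ TriLattice.Adj v u) ∨
    (∃ u₁ ∈ V, ∃ u₂ ∈ V, TriLattice.Adj v u₁ ∧ TriLattice.Adj v u₂ ∧
      bc u₁ ≠ bc u₂ ∧ (∀ u ∈ V, TriLattice.Adj v u → u = u₁ ∨ u = u₂) ∧
      ((Vsub V d (bc u₁)).filter (fun u => TriLattice.Adj v u)).card ≤ 1 ∧
      ((Vsub V d (bc u₂)).filter (fun u => TriLattice.Adj v u)).card ≤ 1) :=
  heavy_vertex_dichotomy_general V d v hlight hnt
end

section
/- If for every weighted hexagonal graph G with all even weights there is a proper multicoloring using at most 15⌊ω(G)/12⌋ + 15 colors, then for every weighted hexagonal graph G (arbitrary weights) there is a proper multicoloring using at most 15⌊ω(G)/12⌋ + 18 colors. -/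
def CliqueWeightLE (d : ℤ × ℤ → ℕ) (n : ℕ) : Prop :=
  ∀ s : Finset (ℤ × ℤ), TriLattice.IsClique (s : Set (ℤ × ℤ)) → ∑ v ∈ s, d v ≤ n

def HexColorable (d : ℤ × ℤ → ℕ) (n : ℕ) : Prop :=
  ∃ f : ℤ × ℤ → Finset (Fin n), (∀ v, d v ≤ (f v).card) ∧
    ∀ ⦃u v⦄, TriLattice.Adj u v → Disjoint (f u) (f v)

/-! Write `d = 2 ⌊d/2⌋ + (d mod 2)`. The even part `2 ⌊d/2⌋` has clique weights at most `ω`,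
so the hypothesis colors it with `15 ⌊ω/12⌋ + 15` colors; the parity part `d mod 2` is at most one
per vertex, so the proper 3-coloring `(x, y) ↦ x + 2y mod 3` of the triangular lattice colors it
with 3 fresh colors. -/

theorem CliqueWeightLE.mono {d e : ℤ × ℤ → ℕ} {n : ℕ} (hed : ∀ v, e v ≤ d v)
    (hd : CliqueWeightLE d n) : CliqueWeightLE e n :=
  fun s hs => (Finset.sum_le_sum fun v _ => hed v).trans (hd s hs)

theorem HexColorable.add {d e : ℤ × ℤ → ℕ} {m k : ℕ} (hd : HexColorable d m)
    (he : HexColorable e k) : HexColorable (d + e) (m + k) := by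
  obtain ⟨f, hf_card, hf_adj⟩ := hd
  obtain ⟨g, hg_card, hg_adj⟩ := he
  refine ⟨fun v => ((f v).disjSum (g v)).map finSumFinEquiv.toEmbedding, fun v => ?_,
    fun u v huv => ?_⟩
  · rw [Finset.card_map, Finset.card_disjSum]
    exact add_le_add (hf_card v) (hg_card v)
  · rw [Finset.disjoint_map, Finset.disjoint_left]
    have hf := Finset.disjoint_left.1 (hf_adj huv)
    have hg := Finset.disjoint_left.1 (hg_adj huv)
    rintro (i | i)
    · simpa using @hf i
    · simpa using @hg i

def TriLattice.zmodThreeColoring : TriLattice.Coloring (ZMod 3) :=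
  SimpleGraph.Coloring.mk (fun v => ((v.1 + 2 * v.2 : ℤ) : ZMod 3)) fun {u v} huv => by
    rw [Ne, ZMod.intCast_eq_intCast_iff_dvd_sub]
    simp only [TriLattice, Set.mem_insert_iff, Set.mem_singleton_iff, Prod.mk.injEq] at huv
    omega

theorem TriLattice.colorable_three : TriLattice.Colorable 3 := by
  simpa using TriLattice.zmodThreeColoring.colorable

theorem hexColorable_of_le_one {e : ℤ × ℤ → ℕ} {k : ℕ} (hk : TriLattice.Colorable k)
    (he : ∀ v, e v ≤ 1) : HexColorable e k := by
  obtain ⟨c⟩ := hk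
  refine ⟨fun v => {c v}, fun v => by simpa using he v, fun u v huv => ?_⟩
  simpa using c.valid huv

/-- From the even-weights bound 15⌊ω/12⌋+15 one gets the general bound 15⌊ω/12⌋+18. -/
theorem general_weights_multicoloring
    (H : ∀ d : ℤ × ℤ → ℕ, (Function.support d).Finite → (∀ v, Even (d v)) →
      ∀ ω : ℕ, CliqueWeightLE d ω → HexColorable d (15 * (ω / 12) + 15)) :
    ∀ d : ℤ × ℤ → ℕ, (Function.support d).Finite →
      ∀ ω : ℕ, CliqueWeightLE d ω → HexColorable d (15 * (ω / 12) + 18) := by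
  intro d hfin ω hω
  have hsupp : (Function.support fun v => 2 * (d v / 2)).Finite :=
    hfin.subset fun v hv => by simp only [Function.mem_support] at hv ⊢; omega
  have heven : HexColorable (fun v => 2 * (d v / 2)) (15 * (ω / 12) + 15) :=
    H _ hsupp (fun v => even_two_mul _) ω (hω.mono fun v => Nat.mul_div_le _ _)
  have hparity : HexColorable (fun v => d v % 2) 3 :=
    hexColorable_of_le_one TriLattice.colorable_three fun v =>
      Nat.lt_succ_iff.1 (Nat.mod_lt _ two_pos)
  have hsplit : (fun v => 2 * (d v / 2)) + (fun v => d v % 2) = d :=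
    funext fun v => Nat.div_add_mod _ _
  simpa [hsplit] using heven.add hparity
end
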